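/- Let B be a real p×q matrix with p ≥ q, and let n ≥ 1. Let M be the (q+p)-square block matrix [[0, n·Bᵀ],[B, (n−1)·I_p]]. Then for every λ ∈ ℝ, det(λ·I_{q+p} − M) = (λ − (n−1))^{p−q} · det((λ² − (n−1)λ)·I_q − n·(BᵀB)). -/

import Mathlib

/-!
Put `t = λ - (n - 1)`. Left multiplication by `[[t I, n Bᵀ], [0, I]]` turns `λ I - M` into a block
lower-triangular matrix with diagonal blocks `t λ I - n BᵀB` and `t I`, so
`t ^ q * det (λ I - M) = t ^ p * det ((λ² - (n - 1) λ) I - n BᵀB)`. Cancelling `t ^ q` gives the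
identity for `λ ≠ n - 1`, and it extends to all `λ` because both sides are continuous in `λ`.
-/

open Matrix

theorem det_fromBlocks_smul_one_mul_pow {R m k : Type*} [CommRing R] [Fintype m] [DecidableEq m]
    [Fintype k] [DecidableEq k] (A : Matrix m m R) (B : Matrix m k R) (C : Matrix k m R) (t : R) :
    t ^ Fintype.card m * (fromBlocks A B C (t • 1)).det =
      t ^ Fintype.card k * (t • A - B * C).det := by
  have elim : fromBlocks (t • 1) (-B) 0 1 * fromBlocks A B C (t • 1) =
      fromBlocks (t • A - B * C) 0 C (t • 1) := by
    simp [fromBlocks_multiply, sub_eq_add_neg]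
  calc t ^ Fintype.card m * (fromBlocks A B C (t • 1)).det
      = (fromBlocks (t • 1) (-B) 0 1 * fromBlocks A B C (t • 1)).det := by
        rw [det_mul, det_fromBlocks_zero₂₁, det_smul, det_one, det_one, mul_one, mul_one]
    _ = t ^ Fintype.card k * (t • A - B * C).det := by
        rw [elim, det_fromBlocks_zero₁₂, det_smul, det_one, mul_one, mul_comm]

theorem det_smul_one_sub_fromBlocks_of_ne {K p q : Type*} [Field K] [Fintype p] [DecidableEq p]
    [Fintype q] [DecidableEq q] (a c l : K) (B : Matrix p q K)
    (hpq : Fintype.card q ≤ Fintype.card p) (hl : l ≠ c) :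
    (l • (1 : Matrix (q ⊕ p) (q ⊕ p) K) - fromBlocks 0 (a • Bᵀ) B (c • 1)).det =
      (l - c) ^ (Fintype.card p - Fintype.card q) * ((l ^ 2 - c * l) • 1 - a • (Bᵀ * B)).det := by
  have hblocks : l • (1 : Matrix (q ⊕ p) (q ⊕ p) K) - fromBlocks 0 (a • Bᵀ) B (c • 1) =
      fromBlocks (l • 1) (-(a • Bᵀ)) (-B) ((l - c) • 1) := by
    rw [← fromBlocks_one, fromBlocks_smul]
    ext (i | i) (j | j) <;> simp [sub_smul]
  have key := det_fromBlocks_smul_one_mul_pow (l • 1) (-(a • Bᵀ)) (-B) (l - c)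
  rw [← hblocks, ← Nat.add_sub_cancel' hpq, pow_add, mul_assoc] at key
  rw [mul_left_cancel₀ (pow_ne_zero _ (sub_ne_zero.mpr hl)) key, smul_smul, Matrix.neg_mul,
    Matrix.mul_neg, neg_neg, Matrix.smul_mul]
  congr 4
  ring

theorem schur_det_D (p q n : ℕ) (hpq : q ≤ p)
    (B : Matrix (Fin p) (Fin q) ℝ) (l : ℝ) :
    (l • (1 : Matrix (Fin q ⊕ Fin p) (Fin q ⊕ Fin p) ℝ) -
        Matrix.fromBlocks 0 ((n : ℝ) • Bᵀ) B (((n : ℝ) - 1) • 1)).det =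
      (l - ((n : ℝ) - 1)) ^ (p - q) *
        ((l ^ 2 - ((n : ℝ) - 1) * l) • (1 : Matrix (Fin q) (Fin q) ℝ) -
          (n : ℝ) • (Bᵀ * B)).det := by
  have hlhs : Continuous fun x : ℝ =>
      (x • (1 : Matrix (Fin q ⊕ Fin p) (Fin q ⊕ Fin p) ℝ) -
        fromBlocks 0 ((n : ℝ) • Bᵀ) B (((n : ℝ) - 1) • 1)).det := by fun_prop
  have hrhs : Continuous fun x : ℝ => (x - ((n : ℝ) - 1)) ^ (p - q) *
        ((x ^ 2 - ((n : ℝ) - 1) * x) • (1 : Matrix (Fin q) (Fin q) ℝ) -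
          (n : ℝ) • (Bᵀ * B)).det := by fun_prop
  refine congrFun (hlhs.ext_on (dense_compl_singleton ((n : ℝ) - 1)) hrhs fun x hx => ?_) l
  simpa using det_smul_one_sub_fromBlocks_of_ne (n : ℝ) ((n : ℝ) - 1) x B
    (by simpa using hpq) hx
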